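/- arXiv:0907.1627 — 3 statements merged into one kernel-verified Lean document; each statement's English description precedes it below -/
import Mathlib

section
/- Let (X, dist) be a metric space, M ≥ 1 an integer, and x_1, …, x_M points of X. Let a ≥ 1 and b ≥ 2 be real numbers. Then there exist an integer M* with 1 ≤ M* ≤ M, a real number p with a ≤ p ≤ b^{2M}·a, and points x*_1, …, x*_{M*} in X such that the closed balls B(x*_i, p), 1 ≤ i ≤ M*, cover {x_1, …, x_M}, and the closed balls B(x*_i, b·p), 1 ≤ i ≤ M*, are pairwise disjoint. -/
set_option maxHeartbeats 2000000

/-- **Covering lemma (Lemma 2 of the paper).**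
Let `X` be a metric space, `M ≥ 1` and `x_1, …, x_M` points of `X`. Let `a ≥ 1` and `b ≥ 2`
be real numbers. Then there exist `1 ≤ M* ≤ M`, a real `p` with `a ≤ p ≤ b^(2M)·a`, and points
`x*_1, …, x*_{M*}` such that the closed balls `B(x*_i, p)` cover `{x_1, …, x_M}` and the closed
balls `B(x*_i, b·p)` are pairwise disjoint. -/
theorem covering_lemma {X : Type*} [MetricSpace X] (M : ℕ) (hM : 1 ≤ M)
    (x : Fin M → X) (a b : ℝ) (ha : 1 ≤ a) (hb : 2 ≤ b) :
    ∃ (Mstar : ℕ) (p : ℝ) (xstar : Fin Mstar → X),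
      1 ≤ Mstar ∧ Mstar ≤ M ∧
      a ≤ p ∧ p ≤ b ^ (2 * M) * a ∧
      (∀ i : Fin M, ∃ j : Fin Mstar, x i ∈ Metric.closedBall (xstar j) p) ∧
      (∀ j j' : Fin Mstar, j ≠ j' →
        Disjoint (Metric.closedBall (xstar j) (b * p)) (Metric.closedBall (xstar j') (b * p))) := by
  classical
  have hb1 : (1:ℝ) ≤ b := by linarith
  have hb0 : (0:ℝ) < b := by linarith
  have ha0 : (0:ℝ) < a := by linarith
  set S : Finset X := Finset.univ.image x with hS
  -- separation radii
  set r : ℕ → ℝ := fun k => 2 * b * (a * b ^ (2 * k)) with hr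
  have hrmono : ∀ k, r k ≤ r (k + 1) := by
    intro k
    have : b ^ (2 * k) ≤ b ^ (2 * (k + 1)) := by
      apply pow_le_pow_right₀ hb1; omega
    simp only [hr]
    gcongr
  have hrmono' : ∀ k l, k ≤ l → r k ≤ r l := by
    intro k l h
    induction l with
    | zero => simp_all
    | succ n ih =>
      rcases Nat.lt_or_ge k (n+1) with h' | h'
      · exact le_trans (ih (by omega)) (hrmono n)
      · have : k = n + 1 := by omega
        simp [this]
  -- separated sets
  set sep : ℝ → Finset X → Prop :=
    fun ρ T => ∀ y ∈ T, ∀ z ∈ T, y ≠ z → ρ < dist y z with hsep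
  set C : ℕ → Finset (Finset X) :=
    fun k => S.powerset.filter (fun T => sep (r k) T) with hC
  have hsingle : ∀ k, ({x ⟨0, hM⟩} : Finset X) ∈ C k := by
    intro k
    simp only [hC, Finset.mem_filter, Finset.mem_powerset]
    constructor
    · intro y hy
      simp only [Finset.mem_singleton] at hy
      simp [hS, hy]
    · intro y hy z hz hne
      simp only [Finset.mem_singleton] at hy hz
      exact absurd (hy.trans hz.symm) hne
  have hCne : ∀ k, ((C k).image Finset.card).Nonempty :=
    fun k => ⟨1, Finset.mem_image.2 ⟨_, hsingle k, Finset.card_singleton _⟩⟩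
  set f : ℕ → ℕ := fun k => ((C k).image Finset.card).max' (hCne k) with hf
  -- basic facts about f
  have hfwit : ∀ k, ∃ T ∈ C k, T.card = f k := by
    intro k
    have := Finset.max'_mem _ (hCne k)
    rw [Finset.mem_image] at this
    obtain ⟨T, hT, hTc⟩ := this
    exact ⟨T, hT, hTc⟩
  have hfle : ∀ k, ∀ T ∈ C k, T.card ≤ f k := by
    intro k T hT
    exact Finset.le_max' _ _ (Finset.mem_image.2 ⟨T, hT, rfl⟩)
  have hf1 : ∀ k, 1 ≤ f k := by
    intro k
    have := hfle k _ (hsingle k)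
    simpa using this
  have hfM : ∀ k, f k ≤ M := by
    intro k
    obtain ⟨T, hT, hTc⟩ := hfwit k
    rw [hC, Finset.mem_filter, Finset.mem_powerset] at hT
    calc f k = T.card := hTc.symm
      _ ≤ S.card := Finset.card_le_card hT.1
      _ ≤ M := by
        simpa using Finset.card_image_le (s := (Finset.univ : Finset (Fin M))) (f := x)
  have hfanti : ∀ k, f (k + 1) ≤ f k := by
    intro k
    obtain ⟨T, hT, hTc⟩ := hfwit (k + 1)
    rw [hC, Finset.mem_filter, Finset.mem_powerset] at hT
    have hTk : T ∈ C k := by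
      rw [hC, Finset.mem_filter, Finset.mem_powerset]
      refine ⟨hT.1, ?_⟩
      intro y hy z hz hne
      exact lt_of_le_of_lt (hrmono k) (hT.2 y hy z hz hne)
    exact hTc ▸ hfle k T hTk
  -- pigeonhole: some consecutive equal values below M
  have hpigeon : ∃ k < M, f (k + 1) = f k := by
    by_contra h
    push_neg at h
    have hstrict : ∀ k < M, f (k + 1) < f k := by
      intro k hk
      exact lt_of_le_of_ne (hfanti k) (h k hk)
    have key : ∀ k ≤ M, f k + k ≤ f 0 := by
      intro k hk
      induction k with
      | zero => simp
      | succ n ih =>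
        have h1 := hstrict n (by omega)
        have h2 := ih (by omega)
        omega
    have := key M le_rfl
    have := hf1 M
    have := hfM 0
    omega
  obtain ⟨k, hkM, hkeq⟩ := hpigeon
  obtain ⟨T, hT, hTc⟩ := hfwit (k + 1)
  have hTmem := hT
  rw [hC, Finset.mem_filter, Finset.mem_powerset] at hT
  set p : ℝ := a * b ^ (2 * (k + 1)) with hp
  have hp0 : 0 < p := by positivity
  have hrk1 : r (k + 1) = 2 * b * p := rfl
  have hrkp : r k ≤ p := by
    have hsplit : b ^ (2 * (k + 1)) = b ^ (2 * k) * b ^ 2 := by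
      rw [show 2 * (k + 1) = 2 * k + 2 by ring, pow_add]
    have hB : (0:ℝ) < b ^ (2 * k) := by positivity
    have : r k = 2 * b * (a * b ^ (2 * k)) := rfl
    rw [this, hp, hsplit]
    have key : a * (b ^ (2 * k) * b ^ 2) - 2 * b * (a * b ^ (2 * k))
        = a * b ^ (2 * k) * b * (b - 2) := by ring
    have hnn : 0 ≤ a * b ^ (2 * k) * b * (b - 2) :=
      mul_nonneg (mul_nonneg (mul_nonneg ha0.le hB.le) hb0.le) (by linarith)
    linarith
  -- the chosen points
  refine ⟨T.card, p, fun j => (T.equivFin.symm j : X), ?_, ?_, ?_, ?_, ?_, ?_⟩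
  · rw [hTc]; exact hf1 (k + 1)
  · calc T.card ≤ S.card := Finset.card_le_card hT.1
      _ ≤ M := by
        simpa using Finset.card_image_le (s := (Finset.univ : Finset (Fin M))) (f := x)
  · rw [hp]
    have : (1:ℝ) ≤ b ^ (2 * (k + 1)) := one_le_pow₀ hb1
    nlinarith
  · rw [hp]
    have : b ^ (2 * (k + 1)) ≤ b ^ (2 * M) := by
      apply pow_le_pow_right₀ hb1; omega
    nlinarith
  · -- covering
    intro i
    by_contra hcon
    push_neg at hcon
    have hfar : ∀ t ∈ T, p < dist (x i) t := by
      intro t ht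
      have := hcon (T.equivFin ⟨t, ht⟩)
      rw [Metric.mem_closedBall] at this
      push_neg at this
      simpa using this
    have hxiT : x i ∉ T := by
      intro hxi
      have := hfar (x i) hxi
      simp at this
      linarith
    have hins : insert (x i) T ∈ C k := by
      rw [hC, Finset.mem_filter, Finset.mem_powerset]
      constructor
      · apply Finset.insert_subset _ hT.1
        simp [hS]
      · intro y hy z hz hne
        rw [Finset.mem_insert] at hy hz
        rcases hy with hy | hy <;> rcases hz with hz | hz
        · exact absurd (hy.trans hz.symm) hne
        · subst hy
          exact lt_of_le_of_lt hrkp (hfar z hz)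
        · subst hz
          rw [dist_comm]
          exact lt_of_le_of_lt hrkp (hfar y hy)
        · exact lt_of_le_of_lt (hrmono k) (hT.2 y hy z hz hne)
    have hcard : (insert (x i) T).card = T.card + 1 := Finset.card_insert_of_notMem hxiT
    have := hfle k _ hins
    rw [hcard, ← hkeq, ← hTc] at this
    omega
  · -- disjointness
    intro j j' hjj'
    have hne : ((T.equivFin.symm j : X)) ≠ ((T.equivFin.symm j' : X)) := by
      intro h
      apply hjj'
      have : T.equivFin.symm j = T.equivFin.symm j' := Subtype.ext h
      exact T.equivFin.symm.injective this
    have hdist : 2 * b * p < dist ((T.equivFin.symm j : X)) ((T.equivFin.symm j' : X)) := by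
      have h1 := (T.equivFin.symm j).2
      have h2 := (T.equivFin.symm j').2
      exact hrk1 ▸ hT.2 _ h1 _ h2 hne
    apply Metric.closedBall_disjoint_closedBall
    linarith
end

section
/- Let ε ∈ (0,1) and M ≥ 1 be an integer. Let (g_N)_{N≥1} be a sequence of positive integers with g_N → ∞, let (λ_N)_{N≥1} be positive reals with λ_N^{−1/2}·g_N^{ε/8} ≥ 1 for all N, and let z_{m,N} ∈ ℤ, 1 ≤ m ≤ M, be arbitrary sequences of integer points. Then there exist sequences of points z*_{1,N}, …, z*_{M,N} in ℤ and sequences of positive integers d_N, h_N such that: (i) λ_N^{−1/2}·g_N^{ε/8} ≤ d_N and h_N ≤ λ_N^{−1/2}·g_N^{ε/4} for all N; (ii) d_N/h_N → 0 as N → ∞; (iii) |z*_{l,N} − z*_{l',N}| ≥ 100·h_N for all l ≠ l' and all N; (iv) there is N_0 such that for all N ≥ N_0, {z_{1,N}, …, z_{M,N}} ⊆ ⋃_{l=1}^{M} [z*_{l,N} − ⌊d_N/2⌋, z*_{l,N} + ⌊d_N/2⌋]. -/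
open Filter Topology

lemma sep_far {M : ℕ} (T : ℤ) (hT : 0 ≤ T) (l l' : Fin M) (hne : l ≠ l') :
    T ≤ |(l : ℤ) * T - (l' : ℤ) * T| := by
  have h1 : ((l : ℤ) - (l' : ℤ)) ≠ 0 := by
    rw [sub_ne_zero]
    intro hll
    exact hne (Fin.val_injective (by exact_mod_cast hll))
  have h2 : (1 : ℤ) ≤ |(l : ℤ) - (l' : ℤ)| := Int.one_le_abs h1
  calc T = 1 * T := (one_mul T).symm
    _ ≤ |(l : ℤ) - (l' : ℤ)| * |T| := by
        rw [abs_of_nonneg hT]; exact mul_le_mul_of_nonneg_right h2 hT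
    _ = |((l : ℤ) - (l' : ℤ)) * T| := (abs_mul _ _).symm
    _ = |(l : ℤ) * T - (l' : ℤ) * T| := by ring_nf

lemma grid_core (M a b : ℕ) (hM : 1 ≤ M) (ha : 1 ≤ a) (hb : 102 ≤ b) (zz : Fin M → ℤ) :
    ∃ j : ℕ, j < M * M + 1 ∧ ∃ zs : Fin M → ℤ,
      (∀ l l' : Fin M, l ≠ l' →
        100 * ((a * b ^ (2 * j + 1) : ℕ) : ℤ) ≤ |zs l - zs l'|) ∧
      (∀ m : Fin M, ∃ l : Fin M, |zz m - zs l| ≤ ((M * (a * b ^ (2 * j)) : ℕ) : ℤ)) := by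
  have hMpos : 0 < M := hM
  haveI : Nonempty (Fin M) := ⟨⟨0, hMpos⟩⟩
  have hbpos : 0 < b := by omega
  -- Step 1 : a good scale exists
  have step1 : ∃ j : ℕ, j < M * M + 1 ∧ ∀ m m' : Fin M,
      ((a * b ^ (2 * j) : ℕ) : ℤ) < |zz m - zz m'| →
      102 * ((a * b ^ (2 * j + 1) : ℕ) : ℤ) < |zz m - zz m'| := by
    by_contra hcon
    push_neg at hcon
    choose m m' h1 h2 using fun j : Fin (M * M + 1) => hcon j.1 j.2
    have key : ∀ i k : Fin (M * M + 1), (i : ℕ) < (k : ℕ) → m i = m k → m' i = m' k → False := by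
      intro i k hlt he1 he2
      have hA := h1 k
      have hB := h2 i
      rw [← he1, ← he2] at hA
      have hnat : 102 * (a * b ^ (2 * (i : ℕ) + 1)) ≤ a * b ^ (2 * (k : ℕ)) := by
        calc 102 * (a * b ^ (2 * (i : ℕ) + 1)) ≤ b * (a * b ^ (2 * (i : ℕ) + 1)) :=
              Nat.mul_le_mul_right _ hb
          _ = a * b ^ (2 * (i : ℕ) + 2) := by ring
          _ ≤ a * b ^ (2 * (k : ℕ)) :=
              Nat.mul_le_mul_left a (Nat.pow_le_pow_right (by omega) (by omega))
      have hnat' : (102 * ((a * b ^ (2 * (i : ℕ) + 1) : ℕ) : ℤ)) ≤ ((a * b ^ (2 * (k : ℕ)) : ℕ) : ℤ) := by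
        exact_mod_cast hnat
      linarith
    have hinj : Function.Injective (fun j : Fin (M * M + 1) => (m j, m' j)) := by
      intro i k hik
      simp only [Prod.mk.injEq] at hik
      by_contra hne
      rcases lt_trichotomy (i : ℕ) (k : ℕ) with h | h | h
      · exact key i k h hik.1 hik.2
      · exact hne (Fin.ext h)
      · exact key k i h hik.1.symm hik.2.symm
    have hcard := Fintype.card_le_of_injective _ hinj
    simp [Fintype.card_fin, Fintype.card_prod] at hcard
  obtain ⟨j, hj, hgood⟩ := step1
  refine ⟨j, hj, ?_⟩
  set cc : ℕ := a * b ^ (2 * j) with hcc_def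
  set hh : ℕ := a * b ^ (2 * j + 1) with hhh_def
  have hccpos : 0 < cc := Nat.mul_pos ha (pow_pos hbpos _)
  have hch : cc ≤ hh :=
    Nat.mul_le_mul_left a (Nat.pow_le_pow_right (by omega) (Nat.le_succ _))
  have hchZ : (cc : ℤ) ≤ (hh : ℤ) := by exact_mod_cast hch
  have hh0 : (0 : ℤ) ≤ (hh : ℤ) := by positivity
  have hgood' : ∀ m m' : Fin M, |zz m - zz m'| ≤ (cc : ℤ) ∨ 102 * (hh : ℤ) < |zz m - zz m'| := by
    intro m m'
    by_cases hc : |zz m - zz m'| ≤ (cc : ℤ)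
    · exact Or.inl hc
    · exact Or.inr (hgood m m' (lt_of_not_ge hc))
  set S : Fin M → Finset (Fin M) :=
    fun m => Finset.univ.filter (fun x => |zz m - zz x| ≤ (cc : ℤ)) with hS_def
  have hmem : ∀ m, m ∈ S m := by
    intro m
    simp only [hS_def, Finset.mem_filter, Finset.mem_univ, true_and, sub_self, abs_zero]
    positivity
  have hSne : ∀ m, (S m).Nonempty := fun m => ⟨m, hmem m⟩
  set f : Fin M → Fin M := fun m => (S m).min' (hSne m) with hf_def
  have hfS : ∀ m, f m ∈ S m := fun m => Finset.min'_mem _ _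
  have hR : ∀ m, |zz m - zz (f m)| ≤ (cc : ℤ) := by
    intro m
    have := hfS m
    simp only [hS_def, Finset.mem_filter, Finset.mem_univ, true_and] at this
    exact this
  have keyS : ∀ m x : Fin M, |zz m - zz x| ≤ (cc : ℤ) → S m = S x := by
    intro m x hmx
    ext y
    simp only [hS_def, Finset.mem_filter, Finset.mem_univ, true_and]
    constructor
    · intro hy
      have htri : |zz x - zz y| ≤ |zz x - zz m| + |zz m - zz y| := abs_sub_le _ _ _
      rw [abs_sub_comm (zz x) (zz m)] at htri
      rcases hgood' x y with h' | h'
      · exact h'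
      · linarith
    · intro hy
      have htri : |zz m - zz y| ≤ |zz m - zz x| + |zz x - zz y| := abs_sub_le _ _ _
      rcases hgood' m y with h' | h'
      · exact h'
      · linarith
  have hfix : ∀ m x : Fin M, |zz m - zz x| ≤ (cc : ℤ) → f m = f x := by
    intro m x hmx
    have hS := keyS m x hmx
    apply le_antisymm
    · exact Finset.min'_le _ _ (by rw [hS]; exact Finset.min'_mem _ _)
    · exact Finset.min'_le _ _ (by rw [← hS]; exact Finset.min'_mem _ _)
  have hff : ∀ m, f (f m) = f m := fun m => (hfix m (f m) (hR m)).symm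
  have hsep_cl : ∀ l l' : Fin M, f l = l → f l' = l' → l ≠ l' →
      102 * (hh : ℤ) < |zz l - zz l'| := by
    intro l l' h1 h2 hne
    rcases hgood' l l' with hle | hlt
    · exact absurd (by rw [← h1, ← h2]; exact hfix l l' hle) hne
    · exact hlt
  set maxz : ℤ := Finset.univ.sup' Finset.univ_nonempty zz with hmax_def
  set zs : Fin M → ℤ :=
    fun l => if f l = l then zz l else maxz + (((l : ℕ) : ℤ) + 1) * (200 * (hh : ℤ)) with hzs_def
  refine ⟨zs, ?_, ?_⟩
  · intro l l' hne
    have hcast : ((a * b ^ (2 * j + 1) : ℕ) : ℤ) = (hh : ℤ) := by rw [hhh_def]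
    rw [hcast]
    by_cases h1 : f l = l <;> by_cases h2 : f l' = l'
    · simp only [hzs_def, if_pos h1, if_pos h2]
      have := hsep_cl l l' h1 h2 hne
      linarith
    · simp only [hzs_def, if_pos h1, if_neg h2]
      have hzl : zz l ≤ maxz := Finset.le_sup' zz (Finset.mem_univ l)
      have h3 : (1 : ℤ) ≤ ((l' : ℕ) : ℤ) + 1 := by omega
      have h4 : 200 * (hh : ℤ) ≤ (((l' : ℕ) : ℤ) + 1) * (200 * (hh : ℤ)) :=
        le_mul_of_one_le_left (by positivity) h3
      have h5 := neg_le_abs (zz l - (maxz + (((l' : ℕ) : ℤ) + 1) * (200 * (hh : ℤ))))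
      linarith
    · simp only [hzs_def, if_neg h1, if_pos h2]
      have hzl : zz l' ≤ maxz := Finset.le_sup' zz (Finset.mem_univ l')
      have h3 : (1 : ℤ) ≤ ((l : ℕ) : ℤ) + 1 := by omega
      have h4 : 200 * (hh : ℤ) ≤ (((l : ℕ) : ℤ) + 1) * (200 * (hh : ℤ)) :=
        le_mul_of_one_le_left (by positivity) h3
      have h5 := le_abs_self ((maxz + (((l : ℕ) : ℤ) + 1) * (200 * (hh : ℤ))) - zz l')
      linarith
    · simp only [hzs_def, if_neg h1, if_neg h2]
      have key := sep_far (200 * (hh : ℤ)) (by positivity) l l' hne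
      have heq : (maxz + (((l : ℕ) : ℤ) + 1) * (200 * (hh : ℤ)))
          - (maxz + (((l' : ℕ) : ℤ) + 1) * (200 * (hh : ℤ)))
          = ((l : ℕ) : ℤ) * (200 * (hh : ℤ)) - ((l' : ℕ) : ℤ) * (200 * (hh : ℤ)) := by ring
      rw [heq]
      linarith
  · intro m
    refine ⟨f m, ?_⟩
    have hzfm : zs (f m) = zz (f m) := if_pos (hff m)
    rw [hzfm]
    have h1 := hR m
    have h2 : ((cc : ℕ) : ℤ) ≤ ((M * (a * b ^ (2 * j)) : ℕ) : ℤ) := by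
      have : cc ≤ M * (a * b ^ (2 * j)) := by
        rw [hcc_def]
        exact Nat.le_mul_of_pos_left _ hMpos
      exact_mod_cast this
    linarith

/-- **Existence of partially inhomogeneous grids (Proposition 2 of the paper).**
Given `ε ∈ (0,1)`, `M ≥ 1`, a sequence of positive integers `g_N → ∞` (playing the role of
`|G_N|`), positive reals `λ_N` with `λ_N^{-1/2} g_N^{ε/8} ≥ 1`, and arbitrary integer sequences
`z_{m,N}`, there exist points `z*_{l,N} ∈ ℤ` and positive integers `d_N, h_N` such that
(i) `λ_N^{-1/2} g_N^{ε/8} ≤ d_N` and `h_N ≤ λ_N^{-1/2} g_N^{ε/4}`,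
(ii) `d_N / h_N → 0`,
(iii) `|z*_{l,N} − z*_{l',N}| ≥ 100 h_N` for `l ≠ l'`, and
(iv) eventually every `z_{m,N}` lies in some interval `[z*_{l,N} − ⌊d_N/2⌋, z*_{l,N} + ⌊d_N/2⌋]`. -/
theorem grid_existence (ε : ℝ) (hε0 : 0 < ε) (hε1 : ε < 1) (M : ℕ) (hM : 1 ≤ M)
    (g : ℕ → ℕ) (hgpos : ∀ N, 0 < g N) (hg : Tendsto g atTop atTop)
    (lam : ℕ → ℝ) (hlampos : ∀ N, 0 < lam N)
    (hlamg : ∀ N, 1 ≤ (lam N) ^ (-(1 : ℝ) / 2) * (g N : ℝ) ^ (ε / 8))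
    (z : Fin M → ℕ → ℤ) :
    ∃ (zstar : Fin M → ℕ → ℤ) (d h : ℕ → ℕ),
      (∀ N, 0 < d N ∧ 0 < h N) ∧
      (∀ N, (lam N) ^ (-(1 : ℝ) / 2) * (g N : ℝ) ^ (ε / 8) ≤ (d N : ℝ) ∧
        (h N : ℝ) ≤ (lam N) ^ (-(1 : ℝ) / 2) * (g N : ℝ) ^ (ε / 4)) ∧
      Tendsto (fun N => (d N : ℝ) / (h N : ℝ)) atTop (𝓝 0) ∧
      (∀ N, ∀ l l' : Fin M, l ≠ l' →
        (100 * (h N : ℤ)) ≤ |zstar l N - zstar l' N|) ∧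
      (∃ N₀ : ℕ, ∀ N ≥ N₀, ∀ m : Fin M, ∃ l : Fin M,
        |z m N - zstar l N| ≤ ((d N / 2 : ℕ) : ℤ)) := by
  have hMpos : 0 < M := hM
  set u : ℝ := ε / (16 * ((M : ℝ) * M + 1)) with hu_def
  have hu : 0 < u := by
    apply div_pos hε0
    positivity
  -- basic facts about A
  set A : ℕ → ℝ := fun N => (lam N) ^ (-(1 : ℝ) / 2) * (g N : ℝ) ^ (ε / 8) with hA_def
  have hA1 : ∀ N, 1 ≤ A N := hlamg
  have hA0 : ∀ N, 0 < A N := fun N => lt_of_lt_of_le one_pos (hA1 N)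
  have hgR1 : ∀ N, (1 : ℝ) ≤ (g N : ℝ) := by
    intro N; exact_mod_cast hgpos N
  have hgR0 : ∀ N, (0 : ℝ) < (g N : ℝ) := fun N => lt_of_lt_of_le one_pos (hgR1 N)
  -- the key identity  A N * g^{ε/8} = λ^{-1/2} g^{ε/4}
  have hAg : ∀ N, A N * (g N : ℝ) ^ (ε / 8)
      = (lam N) ^ (-(1 : ℝ) / 2) * (g N : ℝ) ^ (ε / 4) := by
    intro N
    rw [hA_def, mul_assoc, ← Real.rpow_add (hgR0 N)]
    have he : ε / 8 + ε / 8 = ε / 4 := by ring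
    rw [he]
  set a : ℕ → ℕ := fun N => ⌈A N⌉₊ with ha_def
  set b : ℕ → ℕ := fun N => ⌊(g N : ℝ) ^ u⌋₊ with hb_def
  have ha1 : ∀ N, 1 ≤ a N := by
    intro N
    exact Nat.one_le_ceil_iff.mpr (hA0 N)
  have haA : ∀ N, A N ≤ (a N : ℝ) := fun N => Nat.le_ceil _
  have haA2 : ∀ N, (a N : ℝ) ≤ 2 * A N := by
    intro N
    have h1 : (a N : ℝ) < A N + 1 := Nat.ceil_lt_add_one (hA0 N).le
    have := hA1 N
    linarith
  -- choose N₀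
  have hgr : Tendsto (fun N => ((g N : ℝ)) ^ u) atTop atTop :=
    (tendsto_rpow_atTop hu).comp (tendsto_natCast_atTop_atTop.comp hg)
  obtain ⟨N₀, hN₀⟩ := eventually_atTop.mp (hgr.eventually_ge_atTop 103)
  have hb102 : ∀ N, N₀ ≤ N → 102 ≤ b N := by
    intro N hN
    rw [hb_def]
    exact Nat.le_floor (le_trans (by norm_num) (hN₀ N hN))
  have hbR : ∀ N, (b N : ℝ) ≤ (g N : ℝ) ^ u := fun N =>
    Nat.floor_le (Real.rpow_nonneg (hgR0 N).le u)
  -- main pointwise claim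
  have main : ∀ N, ∃ (dd hh : ℕ) (zs : Fin M → ℤ),
      0 < dd ∧ 0 < hh ∧ A N ≤ (dd : ℝ) ∧
      ((hh : ℝ) ≤ (lam N) ^ (-(1 : ℝ) / 2) * (g N : ℝ) ^ (ε / 4)) ∧
      (∀ l l' : Fin M, l ≠ l' → 100 * (hh : ℤ) ≤ |zs l - zs l'|) ∧
      (N₀ ≤ N → ((dd : ℝ) / (hh : ℝ) ≤ 2 * M / (b N : ℝ) ∧
        ∀ m : Fin M, ∃ l : Fin M, |z m N - zs l| ≤ ((dd / 2 : ℕ) : ℤ))) := by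
    intro N
    by_cases hN : N₀ ≤ N
    · -- large N: use grid_core
      obtain ⟨j, hj, zs, hsep, hcov⟩ :=
        grid_core M (a N) (b N) hM (ha1 N) (hb102 N hN) (fun m => z m N)
      have hbposN : 0 < b N := by have := hb102 N hN; omega
      have hbpow : 0 < b N ^ (2 * j) := pow_pos hbposN _
      refine ⟨2 * (M * (a N * b N ^ (2 * j))), a N * b N ^ (2 * j + 1), zs, ?_, ?_, ?_, ?_, ?_, ?_⟩
      · have := ha1 N
        positivity
      · have := ha1 N
        positivity
      · -- A ≤ dd
        have h1 : a N ≤ 2 * (M * (a N * b N ^ (2 * j))) := by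
          have h2 : a N ≤ a N * (2 * (M * b N ^ (2 * j))) :=
            Nat.le_mul_of_pos_right _ (Nat.mul_pos (by norm_num) (Nat.mul_pos hMpos hbpow))
          calc a N ≤ a N * (2 * (M * b N ^ (2 * j))) := h2
            _ = 2 * (M * (a N * b N ^ (2 * j))) := by ring
        calc A N ≤ (a N : ℝ) := haA N
          _ ≤ ((2 * (M * (a N * b N ^ (2 * j))) : ℕ) : ℝ) := by exact_mod_cast h1
      · -- hh upper bound
        have hgu1 : (1 : ℝ) ≤ (g N : ℝ) ^ u := le_trans (by norm_num) (hN₀ N hN)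
        have hgu103 : (103 : ℝ) ≤ (g N : ℝ) ^ u := hN₀ N hN
        have hgun : (0 : ℝ) < (g N : ℝ) ^ (u * ((2 * (M * M) + 1 : ℕ) : ℝ)) :=
          Real.rpow_pos_of_pos (hgR0 N) _
        have e2 : u * ((2 * (M * M) + 1 : ℕ) : ℝ) + u = ε / 8 := by
          rw [hu_def]
          have hMn : (16 : ℝ) * ((M : ℝ) * M + 1) ≠ 0 := by positivity
          field_simp
          push_cast
          ring
        have e3 : (g N : ℝ) ^ (u * ((2 * (M * M) + 1 : ℕ) : ℝ)) * (g N : ℝ) ^ u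
            = (g N : ℝ) ^ (ε / 8) := by
          rw [← Real.rpow_add (hgR0 N), e2]
        calc ((a N * b N ^ (2 * j + 1) : ℕ) : ℝ)
            = (a N : ℝ) * (b N : ℝ) ^ (2 * j + 1) := by push_cast; ring
          _ ≤ (2 * A N) * ((g N : ℝ) ^ u) ^ (2 * j + 1) := by
              apply mul_le_mul (haA2 N) _ (by positivity) (by linarith [hA0 N])
              exact pow_le_pow_left₀ (by positivity) (hbR N) _
          _ ≤ (2 * A N) * ((g N : ℝ) ^ u) ^ (2 * (M * M) + 1) := by
              have hA0' := (hA0 N).le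
              have hexp : 2 * j + 1 ≤ 2 * (M * M) + 1 := by omega
              have := pow_le_pow_right₀ hgu1 hexp
              nlinarith
          _ = 2 * A N * (g N : ℝ) ^ (u * ((2 * (M * M) + 1 : ℕ) : ℝ)) := by
              rw [← Real.rpow_natCast ((g N : ℝ) ^ u) (2 * (M * M) + 1),
                ← Real.rpow_mul (hgR0 N).le]
          _ ≤ A N * (g N : ℝ) ^ (ε / 8) := by
              have h9 : 2 * (g N : ℝ) ^ (u * ((2 * (M * M) + 1 : ℕ) : ℝ))
                  ≤ (g N : ℝ) ^ (u * ((2 * (M * M) + 1 : ℕ) : ℝ)) * (g N : ℝ) ^ u := by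
                nlinarith [hgun, hgu103]
              have h10 := mul_le_mul_of_nonneg_left h9 (hA0 N).le
              calc 2 * A N * (g N : ℝ) ^ (u * ((2 * (M * M) + 1 : ℕ) : ℝ))
                  = A N * (2 * (g N : ℝ) ^ (u * ((2 * (M * M) + 1 : ℕ) : ℝ))) := by ring
                _ ≤ A N * ((g N : ℝ) ^ (u * ((2 * (M * M) + 1 : ℕ) : ℝ)) * (g N : ℝ) ^ u) := h10
                _ = A N * (g N : ℝ) ^ (ε / 8) := by rw [e3]
          _ = (lam N) ^ (-(1 : ℝ) / 2) * (g N : ℝ) ^ (ε / 4) := hAg N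
      · -- separation
        exact hsep
      · intro _
        constructor
        · -- ratio
          have hhpos : (0 : ℝ) < ((a N * b N ^ (2 * j + 1) : ℕ) : ℝ) := by
            have := ha1 N
            positivity
          have hbposR : (0 : ℝ) < (b N : ℝ) := by exact_mod_cast hbposN
          rw [div_le_div_iff₀ hhpos hbposR]
          apply le_of_eq
          push_cast
          ring
        · -- coverage
          intro m
          obtain ⟨l, hl⟩ := hcov m
          refine ⟨l, ?_⟩
          have hdiv : 2 * (M * (a N * b N ^ (2 * j))) / 2 = M * (a N * b N ^ (2 * j)) := by
            omega
          rw [hdiv]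
          exact hl
    · -- small N: trivial construction
      refine ⟨a N, ⌊A N⌋₊, fun l => ((l : ℕ) : ℤ) * (100 * (⌊A N⌋₊ : ℤ)), ?_, ?_, haA N, ?_, ?_, ?_⟩
      · exact lt_of_lt_of_le one_pos (ha1 N)
      · exact Nat.floor_pos.mpr (hA1 N)
      · -- hh bound
        have h1 : ((⌊A N⌋₊ : ℕ) : ℝ) ≤ A N := Nat.floor_le (hA0 N).le
        have h2 : (1 : ℝ) ≤ (g N : ℝ) ^ (ε / 8) :=
          Real.one_le_rpow (hgR1 N) (by positivity)
        calc ((⌊A N⌋₊ : ℕ) : ℝ) ≤ A N := h1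
          _ = A N * 1 := (mul_one _).symm
          _ ≤ A N * (g N : ℝ) ^ (ε / 8) := by nlinarith [hA0 N, h2]
          _ = (lam N) ^ (-(1 : ℝ) / 2) * (g N : ℝ) ^ (ε / 4) := hAg N
      · intro l l' hne
        exact sep_far (100 * (⌊A N⌋₊ : ℤ)) (by positivity) l l' hne
      · intro hcon
        exact absurd hcon hN
  choose d h zstar P1 P2 P3 P4 P5 P6 using main
  refine ⟨fun l N => zstar N l, d, h, fun N => ⟨P1 N, P2 N⟩, fun N => ⟨P3 N, P4 N⟩, ?_,
    fun N l l' hne => P5 N l l' hne, ⟨N₀, fun N hN m => (P6 N hN).2 m⟩⟩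
  -- tendsto
  have hb_t : Tendsto (fun N => (b N : ℝ)) atTop atTop :=
    tendsto_natCast_atTop_atTop.comp (tendsto_nat_floor_atTop.comp hgr)
  have hupper : Tendsto (fun N => 2 * (M : ℝ) / (b N : ℝ)) atTop (𝓝 0) :=
    Tendsto.div_atTop tendsto_const_nhds hb_t
  apply tendsto_of_tendsto_of_tendsto_of_le_of_le' tendsto_const_nhds hupper
  · exact Eventually.of_forall fun N => by positivity
  · exact eventually_atTop.mpr ⟨N₀, fun N hN => (P6 N hN).1⟩
end

section
/- Let d ≥ 2 be an integer and let T be a simple graph that is connected, acyclic, and in which every vertex has degree d + 1 (the infinite (d+1)-regular tree). Then there exists a constant c > 0, depending only on d, such that for every n ≥ 1 and all vertices x, y of T, the number of walks of length n from x to y in T is at most e^{−c·n}·(d+1)^n. Equivalently, the n-step transition probability of the simple random walk on T (which at each step moves to a uniformly chosen neighbour) satisfies p_n(x,y) ≤ e^{−c·n}. -/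
/-- The number of walks of length `n` from `x` to `y` in the simple graph `T`
(sequences of `n+1` vertices starting at `x`, ending at `y`, with consecutive
vertices adjacent). -/
noncomputable def walkCount {V : Type*} (T : SimpleGraph V) (n : ℕ) (x y : V) : ℕ :=
  {f : Fin (n + 1) → V |
    f 0 = x ∧ f (Fin.last n) = y ∧ ∀ i : Fin n, T.Adj (f i.castSucc) (f i.succ)}.ncard

/-! For a vertex `y` of a tree whose vertices have degree `d + 1`, the function
`z ↦ s ^ dist y z` with `s = 1 / √d` satisfies
`∑_{w ∼ z} s ^ dist y w ≤ 2√d · s ^ dist y z`: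
at most one neighbour of `z` is closer to `y` and the others are one step farther.
Peeling off the first step of a walk then gives `walkCount T n x y ≤ (2√d) ^ n`, and
`2√d < d + 1` for `d ≥ 2` by AM-GM. -/

open SimpleGraph

section

variable {V : Type*} {T : SimpleGraph V}

def walkSet (T : SimpleGraph V) (n : ℕ) (x y : V) : Set (Fin (n + 1) → V) :=
  {f | f 0 = x ∧ f (Fin.last n) = y ∧ ∀ i : Fin n, T.Adj (f i.castSucc) (f i.succ)}

lemma walkCount_eq_ncard_walkSet (n : ℕ) (x y : V) :
    walkCount T n x y = (walkSet T n x y).ncard := rfl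

lemma walkCount_zero (x y : V) [Decidable (x = y)] :
    walkCount T 0 x y = if x = y then 1 else 0 := by
  have hset : walkSet T 0 x y = {f | f 0 = x ∧ f 0 = y} := by
    simp [walkSet, Fin.last]
  rw [walkCount_eq_ncard_walkSet, hset]
  split_ifs with h
  · subst h
    exact Set.ncard_eq_one.mpr ⟨fun _ => x, by ext f; simp [funext_iff, Fin.forall_fin_one]⟩
  · have hempty : {f : Fin 1 → V | f 0 = x ∧ f 0 = y} = ∅ :=
      Set.eq_empty_of_forall_notMem fun f hf => h (hf.1.symm.trans hf.2)
    rw [hempty, Set.ncard_empty]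

lemma walkSet_succ (n : ℕ) (x y : V) :
    walkSet T (n + 1) x y = ⋃ w ∈ T.neighborSet x, Fin.cons x '' walkSet T n w y := by
  ext f
  simp only [Set.mem_iUnion, Set.mem_image, mem_neighborSet, exists_prop]
  constructor
  · rintro ⟨h0, hlast, hadj⟩
    refine ⟨f 1, h0 ▸ hadj 0, Fin.tail f, ⟨rfl, hlast, fun i => ?_⟩, ?_⟩
    · simpa [Fin.tail, ← Fin.succ_castSucc] using hadj i.succ
    · rw [← h0, Fin.cons_self_tail]
  · rintro ⟨w, hxw, g, ⟨hg0, hglast, hgadj⟩, rfl⟩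
    refine ⟨rfl, by simpa [← Fin.succ_last] using hglast, fun i => ?_⟩
    cases i using Fin.cases with
    | zero => simpa [hg0] using hxw
    | succ j => simpa [← Fin.succ_castSucc] using hgadj j

lemma walkCount_succ_le [T.LocallyFinite] (n : ℕ) (x y : V) :
    walkCount T (n + 1) x y ≤ ∑ w ∈ T.neighborFinset x, walkCount T n w y := by
  have hunion : ⋃ w ∈ T.neighborSet x, Fin.cons x '' walkSet T n w y =
      ⋃ w ∈ T.neighborFinset x, Fin.cons (α := fun _ => V) x '' walkSet T n w y := by
    simp only [mem_neighborFinset, mem_neighborSet]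
  rw [walkCount_eq_ncard_walkSet, walkSet_succ, hunion]
  refine (Finset.set_ncard_biUnion_le _ _).trans_eq (Finset.sum_congr rfl fun w _ => ?_)
  exact Set.ncard_image_of_injective _ (Fin.cons_right_injective (α := fun _ => V) x)

theorem walkCount_le_pow_mul_of_sum_le [T.LocallyFinite] {φ : V → ℝ} {r : ℝ} {y : V}
    (hφ : ∀ z, 0 ≤ φ z) (hφy : 1 ≤ φ y)
    (hsum : ∀ z, ∑ w ∈ T.neighborFinset z, φ w ≤ r * φ z)
    (n : ℕ) (x : V) : (walkCount T n x y : ℝ) ≤ r ^ n * φ x := by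
  have hr : 0 ≤ r := by
    have hry := (Finset.sum_nonneg fun w _ => hφ w).trans (hsum y)
    nlinarith
  induction n generalizing x with
  | zero =>
    classical
    rw [walkCount_zero, pow_zero, one_mul]
    split_ifs with h
    · simpa [h] using hφy
    · simpa using hφ x
  | succ n ih =>
    calc (walkCount T (n + 1) x y : ℝ)
        ≤ ∑ w ∈ T.neighborFinset x, (walkCount T n w y : ℝ) := by
          exact_mod_cast walkCount_succ_le n x y
      _ ≤ ∑ w ∈ T.neighborFinset x, r ^ n * φ w := Finset.sum_le_sum fun w _ => ih w
      _ = r ^ n * ∑ w ∈ T.neighborFinset x, φ w := (Finset.mul_sum _ _ _).symm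
      _ ≤ r ^ n * (r * φ x) := by gcongr; exact hsum x
      _ = r ^ (n + 1) * φ x := by ring

theorem SimpleGraph.IsAcyclic.eq_of_adj_of_dist_add_one (hT : T.IsAcyclic) {y z w₁ w₂ : V}
    (h₁ : T.Adj z w₁) (h₂ : T.Adj z w₂) (hd₁ : T.dist y w₁ + 1 = T.dist y z)
    (hd₂ : T.dist y w₂ + 1 = T.dist y z) : w₁ = w₂ := by
  have hyz : T.Reachable y z := Reachable.of_dist_ne_zero (by omega)
  obtain ⟨p, hp, -⟩ := hyz.exists_path_of_dist
  have eq_penultimate {w : V} (h : T.Adj z w) (hd : T.dist y w + 1 = T.dist y z) :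
      w = p.penultimate := by
    obtain ⟨q, hq, hql⟩ := (p.reachable.trans h.reachable).exists_path_of_dist
    have hz : z ∉ q.support := fun hz => by
      classical
      have := (dist_le (q.takeUntil z hz)).trans (q.length_takeUntil_le_length hz)
      omega
    exact hT.eq_penultimate_of_adj_end hp h
      (hT.mem_support_of_ne_mem_support_of_adj_of_isPath hp hq h hz)
  rw [eq_penultimate h₁ hd₁, eq_penultimate h₂ hd₂]

theorem SimpleGraph.IsTree.sum_neighborFinset_pow_dist_le [T.LocallyFinite] (hT : T.IsTree)
    {d : ℕ} {s : ℝ} (hs0 : 0 < s) (hs1 : s ≤ 1) (y z : V) (hz : T.degree z = d + 1) :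
    ∑ w ∈ T.neighborFinset z, s ^ T.dist y w ≤ (s⁻¹ + d * s) * s ^ T.dist y z := by
  classical
  set N := T.neighborFinset z
  set closer : V → Prop := fun w => T.dist y w + 1 = T.dist y z
  have hcloser : ∀ w ∈ N.filter closer, s ^ T.dist y w = s⁻¹ * s ^ T.dist y z := by
    intro w hw
    rw [← (Finset.mem_filter.mp hw).2, pow_succ', inv_mul_cancel_left₀ hs0.ne']
  have hfarther : ∀ w ∈ N.filter (¬ closer ·), s ^ T.dist y w = s * s ^ T.dist y z := by
    intro w hw
    obtain ⟨hw, hnc⟩ := Finset.mem_filter.mp hw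
    rcases hT.dist_eq_dist_add_one_of_adj y (mem_neighborFinset _ _ _ |>.mp hw) with h | h
    · exact absurd h.symm hnc
    · rw [h, pow_succ, mul_comm]
  have hcard_closer : (N.filter closer).card ≤ 1 := Finset.card_le_one.mpr fun a ha b hb => by
    rw [Finset.mem_filter, mem_neighborFinset] at ha hb
    exact hT.isAcyclic.eq_of_adj_of_dist_add_one ha.1 hb.1 ha.2 hb.2
  have hcard : ((N.filter closer).card : ℝ) + (N.filter (¬ closer ·)).card = d + 1 := by
    rw [← Nat.cast_add, Finset.card_filter_add_card_filter_not, card_neighborFinset_eq_degree,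
      hz]
    push_cast; ring
  have hs_le_inv : s ≤ s⁻¹ := hs1.trans (one_le_inv₀ hs0 |>.mpr hs1)
  rw [← Finset.sum_filter_add_sum_filter_not N closer, Finset.sum_congr rfl hcloser,
    Finset.sum_congr rfl hfarther, Finset.sum_const, Finset.sum_const, nsmul_eq_mul, nsmul_eq_mul]
  have hslack : (0 : ℝ) ≤ (1 - (N.filter closer).card) * (s⁻¹ - s) * s ^ T.dist y z := by
    have : ((N.filter closer).card : ℝ) ≤ 1 := by exact_mod_cast hcard_closer
    have := pow_pos hs0 (T.dist y z)
    apply mul_nonneg (mul_nonneg _ _) <;> linarith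
  linear_combination hslack + s * s ^ T.dist y z * hcard

theorem SimpleGraph.IsTree.walkCount_le_two_mul_sqrt_pow [T.LocallyFinite] (hT : T.IsTree)
    {d : ℕ} (hd : 1 ≤ d) (hreg : T.IsRegularOfDegree (d + 1)) (n : ℕ) (x y : V) :
    (walkCount T n x y : ℝ) ≤ (2 * √d) ^ n := by
  have hd' : (1 : ℝ) ≤ d := by exact_mod_cast hd
  set s : ℝ := (√d)⁻¹
  have hs0 : 0 < s := by positivity
  have hs1 : s ≤ 1 := inv_le_one_of_one_le₀ (Real.one_le_sqrt.mpr hd')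
  have hrate : s⁻¹ + d * s = 2 * √d := by
    rw [inv_inv, ← div_eq_mul_inv, Real.div_sqrt, two_mul]
  calc (walkCount T n x y : ℝ)
      ≤ (s⁻¹ + d * s) ^ n * s ^ T.dist y x :=
        walkCount_le_pow_mul_of_sum_le (φ := fun z => s ^ T.dist y z) (fun z => by positivity)
          (by simp) (fun z => hT.sum_neighborFinset_pow_dist_le hs0 hs1 y z (hreg z)) n x
    _ ≤ (2 * √d) ^ n := by
      rw [hrate]
      exact mul_le_of_le_one_right (by positivity) (pow_le_one₀ hs0.le hs1)

end

/-- **(7.6) of the paper.** For the infinite `(d+1)`-regular tree (`d ≥ 2`, connected,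
acyclic, every vertex of degree `d+1`), there is `c > 0` depending only on `d` such that
the number of walks of length `n` between any two vertices is at most `e^{−cn}(d+1)^n`;
equivalently the `n`-step transition probability of the simple random walk satisfies
`p_n(x,y) ≤ e^{−cn}`. -/
theorem regular_tree_heat_kernel_decay (d : ℕ) (hd : 2 ≤ d) :
    ∃ c : ℝ, 0 < c ∧
      ∀ (V : Type*) (T : SimpleGraph V), T.Connected → T.IsAcyclic →
        (∀ v : V, (T.neighborSet v).ncard = d + 1) →
        ∀ n : ℕ, 1 ≤ n → ∀ x y : V,
          (walkCount T n x y : ℝ) ≤ Real.exp (-c * (n : ℝ)) * ((d : ℝ) + 1) ^ n ∧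
          (walkCount T n x y : ℝ) / ((d : ℝ) + 1) ^ n ≤ Real.exp (-c * (n : ℝ)) := by
  set ρ : ℝ := 2 * √d
  have hρ : 0 < ρ := by positivity
  have hρ_lt : ρ < d + 1 := by
    have h1 : 1 < √(d : ℝ) := Real.lt_sqrt zero_le_one |>.mpr (by norm_num; omega)
    nlinarith [Real.sq_sqrt (Nat.cast_nonneg (α := ℝ) d)]
  refine ⟨Real.log ((d + 1) / ρ), Real.log_pos ((one_lt_div hρ).mpr hρ_lt),
    fun V T hconn hacyc hdeg n _ x y => ?_⟩
  have hexp : Real.exp (-Real.log ((d + 1) / ρ) * n) * ((d : ℝ) + 1) ^ n = ρ ^ n := by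
    rw [neg_mul, Real.exp_neg, ← Real.rpow_def_of_pos (by positivity), Real.rpow_natCast,
      div_pow, inv_div, div_mul_cancel₀ _ (by positivity)]
  have : T.LocallyFinite := fun v => (Set.finite_of_ncard_ne_zero (by simp [hdeg v])).fintype
  have hreg : T.IsRegularOfDegree (d + 1) := fun v => by
    rw [← card_neighborSet_eq_degree, ← Nat.card_eq_fintype_card, Nat.card_coe_set_eq, hdeg]
  have hbound := IsTree.walkCount_le_two_mul_sqrt_pow ⟨hconn, hacyc⟩ (by omega) hreg n x y
  refine ⟨hexp ▸ hbound, ?_⟩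
  rw [div_le_iff₀ (by positivity), hexp]
  exact hbound
end
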